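/- Let M be an admissible matroid on J of rank d + 1 and S = S(M) the associated ranked symplectic matroid. Then the constant function 1 is a Minkowski weight of dimension d on the Bergman fan of S; concretely, for every chain τ of d − 1 admissible flats obtained from a maximal chain of L(S) ∖ {∅, J} by removing one flat, the vector Σ_σ e±_{G_σ} — summing over all maximal chains σ containing τ, with G_σ the unique flat of σ not in τ — lies in the ℝ-linear span of { e±_F : F ∈ τ }. -/

import Mathlib

open Set Matroid
open scoped Matroid

open scoped Classical

/-- The ground set `J = [n] ⊔ [n]*`: `Sum.inl` is `[n]`, `Sum.inr` is `[n]*`. -/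
abbrev J (n : ℕ) := Fin n ⊕ Fin n

/-- The fixed-point-free involution `a ↦ a*` on `J n`. -/
def sstar {n : ℕ} (a : J n) : J n := Sum.swap a

/-- `A* = {a* : a ∈ A}`. -/
def starSet {n : ℕ} (A : Set (J n)) : Set (J n) := sstar '' A

/-- `A` is admissible if `A ∩ A* = ∅`. -/
def Admissible {n : ℕ} (A : Set (J n)) : Prop := A ∩ starSet A = ∅

/-- `A` is totally inadmissible if `A* = A`. -/
def TotallyInadmissible {n : ℕ} (A : Set (J n)) : Prop := starSet A = A

/-- The rank of a set in a matroid (on a finite ground type). -/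
noncomputable def Matroid.rSet {α : Type*} (M : Matroid α) (A : Set α) : ℕ :=
  sSup {k : ℕ | ∃ I, M.Indep I ∧ I ⊆ A ∧ I.ncard = k}

/-- The rank of a matroid. -/
noncomputable def Matroid.rnk {α : Type*} (M : Matroid α) : ℕ := M.rSet M.E

/-- A loopless matroid: every singleton of the ground set is independent. -/
def Matroid.LooplessM {α : Type*} (M : Matroid α) : Prop := ∀ a ∈ M.E, M.Indep {a}

/-- `I^ad M`: the independent sets of `M` whose closure is admissible. -/
def Iad {n : ℕ} (M : Matroid (J n)) : Set (Set (J n)) :=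
  {I | M.Indep I ∧ Admissible (M.closure I)}

/-- An admissible matroid on `J n`. -/
def IsAdmissibleMatroid {n : ℕ} (M : Matroid (J n)) : Prop :=
  M.E = Set.univ ∧ M.LooplessM ∧
    ∀ A : Set (J n),
      M.rSet A = sSup {v : ℕ | ∃ I : Set (J n), M.Indep I ∧ Admissible I ∧ I ⊆ A ∧
        v = if ∃ a, a ∈ A ∧ sstar a ∈ A ∧ (I ∪ {a}) ∈ Iad M ∧ (I ∪ {sstar a}) ∈ Iad M
            then I.ncard + 2 else I.ncard}

/-- Strongly admissible sets with respect to `M`. -/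
inductive StronglyAdmissible {n : ℕ} (M : Matroid (J n)) : Set (J n) → Prop
  | empty : StronglyAdmissible M ∅
  | insert {B : Set (J n)} {a : J n} : StronglyAdmissible M B →
      a ∉ M.closure B → sstar a ∉ M.closure B → StronglyAdmissible M (Insert.insert a B)

/-- The Möbius function of a finite poset, valued in `ℤ`. -/
noncomputable def mob {α : Type*} [PartialOrder α] [Fintype α] (x y : α) : ℤ :=
  letI : DecidableEq α := Classical.decEq α
  letI : @DecidableRel α α (· < ·) := Classical.decRel _
  letI : @DecidableRel α α (· ≤ ·) := Classical.decRel _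
  letI := Fintype.toLocallyFiniteOrder (α := α)
  IncidenceAlgebra.mu ℤ x y

/-- The lattice of flats of the ranked symplectic matroid associated to `M`:
admissible flats of `M` together with the ground set as top element. -/
abbrev LS {n : ℕ} (M : Matroid (J n)) :=
  {F : Set (J n) // (M.IsFlat F ∧ Admissible F) ∨ F = M.E}

/-- The Möbius number `μ(S(M))` of the lattice of flats of the ranked symplectic matroid. -/
noncomputable def muS {n : ℕ} (M : Matroid (J n)) : ℤ :=
  if h : M.IsFlat ∅ ∧ Admissible (∅ : Set (J n)) then
    mob (⟨∅, Or.inl h⟩ : LS M) ⟨M.E, Or.inr rfl⟩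
  else 0

/-- The Möbius function of the lattice of flats of `M`. -/
noncomputable def muFlats {n : ℕ} (M : Matroid (J n)) (F G : Set (J n)) : ℤ :=
  if h : M.IsFlat F ∧ M.IsFlat G then
    mob (⟨F, h.1⟩ : {X : Set (J n) // M.IsFlat X}) ⟨G, h.2⟩
  else 0

/-- Matroid deletion. -/
def Matroid.del {α : Type*} (M : Matroid α) (D : Set α) : Matroid α := M ↾ (M.E \ D)

/-- Matroid contraction, via the dual. -/
def Matroid.con {α : Type*} (M : Matroid α) (C : Set α) : Matroid α := (M✶ ↾ (M✶.E \ C))✶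

/-- A circuit: a minimal dependent subset of the ground set. -/
def Matroid.Circuit' {α : Type*} (M : Matroid α) (C : Set α) : Prop :=
  C ⊆ M.E ∧ ¬ M.Indep C ∧ ∀ D, D ⊂ C → M.Indep D

/-- Connectedness of a matroid: nonempty ground set and any two elements lie
in a common circuit. -/
def Matroid.ConnectedM {α : Type*} (M : Matroid α) : Prop :=
  M.E.Nonempty ∧ ∀ a ∈ M.E, ∀ b ∈ M.E, a = b ∨ ∃ C, M.Circuit' C ∧ a ∈ C ∧ b ∈ C

/-- The 0/1-indicator vector of `B ⊆ J` in `ℝ^J`. -/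
noncomputable def indic {n : ℕ} (B : Set (J n)) : J n → ℝ := fun a => if a ∈ B then 1 else 0

/-- The enveloping map `env : ℝ^J → ℝ^n`, `(env x)_i = x_i - x_{i*}`. -/
def envMap {n : ℕ} (x : J n → ℝ) : Fin n → ℝ := fun i => x (Sum.inl i) - x (Sum.inr i)

/-- `e±_A ∈ ℝ^n`: `+1` on coordinates `i ∈ A`, `-1` on coordinates with `i* ∈ A`, `0` otherwise. -/
noncomputable def epm {n : ℕ} (A : Set (J n)) : Fin n → ℝ := envMap (indic A)

/-- The matroid polytope `P(S(M))` of the ranked symplectic matroid of `M`. -/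
noncomputable def PolyS {n : ℕ} (M : Matroid (J n)) : Set (Fin n → ℝ) :=
  convexHull ℝ (epm '' {B | M.IsBase B ∧ Admissible B})

/-- The support of the Bergman fan of the ranked symplectic matroid of `M`. -/
def Berg {n : ℕ} (M : Matroid (J n)) : Set (Fin n → ℝ) :=
  {ω | ∃ C : Finset (Set (J n)),
    (∀ F ∈ C, M.IsFlat F ∧ Admissible F ∧ F ≠ ∅) ∧
    (∀ F ∈ C, ∀ G ∈ C, F ⊆ G ∨ G ⊆ F) ∧
    ∃ a : Set (J n) → ℝ, (∀ F, 0 ≤ a F) ∧ ω = ∑ F ∈ C, a F • epm F}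

/-- A maximal chain `F₁ ⊊ ⋯ ⊊ F_d` of proper flats of the lattice of flats of `S(M)`,
where `rank_M (F i) = i + 1`. -/
def IsFlagChain {n : ℕ} (M : Matroid (J n)) (d : ℕ) (F : Fin d → Set (J n)) : Prop :=
  (∀ i, M.IsFlat (F i) ∧ Admissible (F i) ∧ M.rSet (F i) = (i : ℕ) + 1) ∧
    ∀ i j : Fin d, i < j → F i ⊂ F j

/-- A Minkowski weight of dimension `d` on the Bergman fan of `S(M)`. -/
def IsMinkowskiWeight {n : ℕ} (M : Matroid (J n)) (d : ℕ)
    (c : (Fin d → Set (J n)) → ℤ) : Prop :=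
  ∀ (σ : Fin d → Set (J n)) (k : Fin d), IsFlagChain M d σ →
    (∑ G ∈ Finset.univ.filter
        (fun G : Set (J n) => IsFlagChain M d (Function.update σ k G)),
        (c (Function.update σ k G) : ℝ) • epm G)
      ∈ Submodule.span ℝ {v : Fin n → ℝ | ∃ i : Fin d, i ≠ k ∧ v = epm (σ i)}

/-- The top (rank `d`) flat of a maximal chain. -/
def chainTop {n d : ℕ} (σ : Fin d → Set (J n)) : Set (J n) := ⋃ i, σ i

/-!
Let `L` be the flat of the chain just below the gap at position `k` (or `∅`). The flats `G` that
fill the gap are admissible flats covering `L`, and two distinct covers of `L` meet exactly in `L`.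

If the chain has a flat `T` just above the gap, the fillers are all covers of `L` inside `T`
(admissible because `T` is), and they partition `T \ L`; hence
`∑ e±_G = e±_T + (#fillers - 1) • e±_L`.

If the gap is at the top, the fillers are all admissible covers of `L`. For `x, x* ∉ L`, the
cover `cl (L ∪ {x})` is admissible iff `cl (L ∪ {x*})` is: either `x*` lies in the first closure
(and then, by exchange, `x` in the second), or `L ∪ {x, x*}` has rank `r(L) + 2`, which by the
rank formula of an admissible matroid forces both closures to be admissible. So `x` and `x*`
contribute equally and `∑ e±_G = #fillers • e±_L`.
-/

open scoped Finset

namespace Matroid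

variable {α : Type*} {M : Matroid α} {F G I X : Set α} {x : α}

section FiniteType

variable [Finite α]

lemma cast_rSet_eq (M : Matroid α) (X : Set α) : (M.rSet X : ℕ∞) = M.eRk X := by
  obtain ⟨I, hI⟩ := M.exists_isBasis' X
  have hub : ∀ k ∈ {k : ℕ | ∃ K, M.Indep K ∧ K ⊆ X ∧ K.ncard = k}, k ≤ I.ncard := by
    rintro _ ⟨K, hK, hKX, rfl⟩
    have hle := hK.encard_le_eRk_of_subset hKX
    rw [← hI.encard_eq_eRk, ← K.toFinite.cast_ncard_eq, ← I.toFinite.cast_ncard_eq] at hle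
    exact_mod_cast hle
  rw [← hI.encard_eq_eRk, ← I.toFinite.cast_ncard_eq, Nat.cast_inj]
  exact le_antisymm (csSup_le ⟨_, I, hI.indep, hI.subset, rfl⟩ hub)
    (le_csSup ⟨_, hub⟩ ⟨I, hI.indep, hI.subset, rfl⟩)

lemma rSet_empty (M : Matroid α) : M.rSet ∅ = 0 := by
  simpa using M.cast_rSet_eq ∅

lemma Indep.ncard_le_rSet (hI : M.Indep I) (hIX : I ⊆ X) : I.ncard ≤ M.rSet X := by
  have hle := hI.encard_le_eRk_of_subset hIX
  rwa [← I.toFinite.cast_ncard_eq, ← cast_rSet_eq, Nat.cast_le] at hle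

lemma rSet_insert (hx : x ∈ M.E \ M.closure X) : M.rSet (insert x X) = M.rSet X + 1 := by
  have h := eRk_insert_eq_add_one hx
  rw [← cast_rSet_eq, ← cast_rSet_eq] at h
  exact_mod_cast h

lemma Indep.closure_eq_of_subset_of_rSet_le (hI : M.Indep I) (hF : M.IsFlat F) (hIF : I ⊆ F)
    (hr : M.rSet F ≤ I.ncard) : M.closure I = F := by
  rw [(M.isRkFinite_set I).closure_eq_closure_of_subset_of_eRk_ge_eRk hIF, hF.closure]
  rwa [hI.eRk_eq_encard, ← I.toFinite.cast_ncard_eq, ← cast_rSet_eq, Nat.cast_le]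

end FiniteType

def FlatCovBy (M : Matroid α) (F G : Set α) : Prop :=
  M.IsFlat F ∧ M.IsFlat G ∧ F ⊆ G ∧ M.eRk G = M.eRk F + 1

lemma flatCovBy_iff_rSet_eq [Finite α] (hF : M.IsFlat F) :
    M.FlatCovBy F G ↔ M.IsFlat G ∧ F ⊆ G ∧ M.rSet G = M.rSet F + 1 := by
  simp only [FlatCovBy, hF, true_and, ← cast_rSet_eq]
  norm_cast

lemma IsFlat.flatCovBy_closure_insert (hF : M.IsFlat F) (hx : x ∈ M.E \ F) :
    M.FlatCovBy F (M.closure (insert x F)) := by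
  refine ⟨hF, M.isFlat_closure _, (subset_insert x F).trans
    (M.subset_closure _ (insert_subset hx.1 hF.subset_ground)), ?_⟩
  rw [eRk_closure_eq, eRk_insert_eq_add_one (by rwa [hF.closure])]

variable [M.RankFinite]

lemma FlatCovBy.eq_closure_insert (h : M.FlatCovBy F G) (hxG : x ∈ G) (hxF : x ∉ F) :
    G = M.closure (insert x F) := by
  obtain ⟨hF, hG, hFG, hr⟩ := h
  have hx : x ∈ M.E \ M.closure F := ⟨hG.subset_ground hxG, by rwa [hF.closure]⟩
  rw [(M.isRkFinite_set _).closure_eq_closure_of_subset_of_eRk_ge_eRk (insert_subset hxG hFG)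
    (by rw [eRk_insert_eq_add_one hx, hr]), hG.closure]

lemma card_filter_mem_of_flatCovBy {s : Finset (Set α)} (hs : ∀ G ∈ s, M.FlatCovBy F G)
    (hx : x ∈ M.E \ F) :
    #{G ∈ s | x ∈ G} = if M.closure (insert x F) ∈ s then 1 else 0 := by
  have hfilter : {G ∈ s | x ∈ G} = {G ∈ s | G = M.closure (insert x F)} :=
    Finset.filter_congr fun G hG ↦ ⟨fun hxG ↦ (hs G hG).eq_closure_insert hxG hx.2,
      fun h ↦ h ▸ M.mem_closure_of_mem' (mem_insert x F) hx.1⟩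
  rw [hfilter, Finset.filter_eq']
  split_ifs <;> rfl

end Matroid

section Symplectic

variable {n : ℕ} {M : Matroid (J n)} {A B F T : Set (J n)} {x : J n}

@[simp] lemma sstar_sstar (a : J n) : sstar (sstar a) = a := Sum.swap_swap a

lemma admissible_iff : Admissible A ↔ ∀ x ∈ A, sstar x ∉ A := by
  simp only [Admissible, starSet, eq_empty_iff_forall_notMem, mem_inter_iff, mem_image, not_and,
    not_exists]
  exact ⟨fun h x hx hsx ↦ h _ hsx x hx rfl, fun h _ hy x hx hxy ↦ h x hx (hxy ▸ hy)⟩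

lemma Admissible.sstar_notMem (h : Admissible A) (hx : x ∈ A) : sstar x ∉ A :=
  admissible_iff.1 h x hx

lemma Admissible.mono (h : Admissible A) (hBA : B ⊆ A) : Admissible B :=
  admissible_iff.2 fun _ hx hsx ↦ h.sstar_notMem (hBA hx) (hBA hsx)

lemma admissible_empty : Admissible (∅ : Set (J n)) :=
  admissible_iff.2 fun _ hx ↦ hx.elim

def envLinearMap : (J n → ℝ) →ₗ[ℝ] (Fin n → ℝ) where
  toFun := envMap
  map_add' _ _ := funext fun _ ↦ by simp only [envMap, Pi.add_apply]; ring
  map_smul' _ _ := funext fun _ ↦ by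
    simp only [envMap, Pi.smul_apply, smul_eq_mul, RingHom.id_apply]; ring

lemma sum_epm (s : Finset (Set (J n))) : ∑ G ∈ s, epm G = envMap (∑ G ∈ s, indic G) :=
  (map_sum envLinearMap indic s).symm

lemma sum_indic_apply (s : Finset (Set (J n))) (x : J n) :
    (∑ G ∈ s, indic G) x = #{G ∈ s | x ∈ G} := by
  simp only [Finset.sum_apply, indic, Finset.sum_boole]

lemma epm_empty : epm (∅ : Set (J n)) = 0 :=
  funext fun _ ↦ by simp [epm, envMap, indic]

lemma sum_epm_of_flatCovBy_subset {s : Finset (Set (J n))} (hF : M.IsFlat F) (hT : M.IsFlat T)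
    (hFT : F ⊆ T) (hs : ∀ G, G ∈ s ↔ M.FlatCovBy F G ∧ G ⊆ T) :
    ∑ G ∈ s, epm G = epm T + ((#s : ℝ) - 1) • epm F := by
  have hindic : ∑ G ∈ s, indic G = indic T + ((#s : ℝ) - 1) • indic F := by
    funext x
    rw [sum_indic_apply, Pi.add_apply, Pi.smul_apply, smul_eq_mul]
    by_cases hxF : x ∈ F
    · rw [Finset.filter_true_of_mem fun G hG ↦ ((hs G).1 hG).1.2.2.1 hxF]
      simp [indic, hxF, hFT hxF]
    by_cases hxT : x ∈ T
    · have hx : x ∈ M.E \ F := ⟨hT.subset_ground hxT, hxF⟩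
      have hmem : M.closure (insert x F) ∈ s := (hs _).2 ⟨hF.flatCovBy_closure_insert hx,
        (M.closure_subset_closure (insert_subset hxT hFT)).trans_eq hT.closure⟩
      rw [card_filter_mem_of_flatCovBy (fun G hG ↦ ((hs G).1 hG).1) hx, if_pos hmem]
      simp [indic, hxT, hxF]
    · rw [Finset.filter_false_of_mem fun G hG hxG ↦ hxT (((hs G).1 hG).2 hxG)]
      simp [indic, hxT, hxF]
  rw [sum_epm, hindic]
  exact (envLinearMap.map_add _ _).trans (congrArg _ (envLinearMap.map_smul _ _))

end Symplectic

section AdmissibleMatroid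

variable {n : ℕ} {M : Matroid (J n)} {F : Set (J n)} {a : J n}

lemma IsAdmissibleMatroid.mem_ground (hM : IsAdmissibleMatroid M) (y : J n) : y ∈ M.E :=
  hM.1 ▸ mem_univ y

lemma IsAdmissibleMatroid.isFlat_empty (hM : IsAdmissibleMatroid M) : M.IsFlat ∅ := by
  have : M.Loopless :=
    loopless_iff_forall_isNonloop.2 fun e he ↦ indep_singleton.1 (hM.2.1 e he)
  simpa [closure_empty, M.loops_eq_empty] using M.isFlat_closure ∅

lemma IsAdmissibleMatroid.exists_indep_admissible_rSet_eq (hM : IsAdmissibleMatroid M)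
    (A : Set (J n)) :
    ∃ I, M.Indep I ∧ Admissible I ∧ I ⊆ A ∧ M.rSet A =
      if ∃ a, a ∈ A ∧ sstar a ∈ A ∧ (I ∪ {a}) ∈ Iad M ∧ (I ∪ {sstar a}) ∈ Iad M
      then I.ncard + 2 else I.ncard := by
  have mem_of_eq_sSup {S : Set ℕ} (h : M.rSet A = sSup S) (hne : S.Nonempty) (hS : BddAbove S) :
      M.rSet A ∈ S := h ▸ Nat.sSup_mem hne hS
  refine mem_of_eq_sSup (hM.2.2 A) ⟨_, ∅, M.empty_indep, admissible_empty, empty_subset A, rfl⟩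
    ⟨Nat.card (J n) + 2, ?_⟩
  rintro _ ⟨I, -, -, -, rfl⟩
  have := I.ncard_le_card
  split_ifs <;> omega

/-- The rank `r(F) + 2` of `F ∪ {a, a*}` can only be attained in the admissible rank formula by
a pair term: an admissible `I` spanning `F` with `cl (I ∪ {a})` and `cl (I ∪ {a*})` admissible. -/
lemma IsAdmissibleMatroid.admissible_closure_insert (hM : IsAdmissibleMatroid M)
    (hF : M.IsFlat F) (hFa : Admissible F) (ha : a ∉ F) (has : sstar a ∉ F)
    (h : sstar a ∉ M.closure (insert a F)) :
    Admissible (M.closure (insert a F)) ∧ Admissible (M.closure (insert (sstar a) F)) := by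
  have hrank : M.rSet (insert (sstar a) (insert a F)) = M.rSet F + 2 := by
    rw [rSet_insert ⟨hM.mem_ground _, h⟩, rSet_insert ⟨hM.mem_ground _, by rwa [hF.closure]⟩]
  obtain ⟨I, hI, hIa, hIA, hval⟩ :=
    hM.exists_indep_admissible_rSet_eq (insert (sstar a) (insert a F))
  split_ifs at hval with hpair
  · obtain ⟨c, hc, hsc, hcI, hscI⟩ := hpair
    obtain ⟨⟨-, hIa₁⟩, ⟨-, hIa₂⟩⟩ : I ∪ {a} ∈ Iad M ∧ I ∪ {sstar a} ∈ Iad M := by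
      rcases hc with rfl | rfl | hcF
      · rw [sstar_sstar] at hscI
        exact ⟨hscI, hcI⟩
      · exact ⟨hcI, hscI⟩
      · exfalso
        rcases hsc with h' | h' | h'
        · exact ha (by rwa [← sstar_sstar c, h', sstar_sstar] at hcF)
        · exact has (by rwa [← sstar_sstar c, h'] at hcF)
        · exact hFa.sstar_notMem hcF h'
    have hsub (b : J n) : I ∪ {b} ⊆ M.closure (I ∪ {b}) :=
      M.subset_closure _ fun y _ ↦ hM.mem_ground y
    have hsa : sstar a ∉ I := fun h' ↦
      hIa₁.sstar_notMem (hsub a (mem_union_right _ rfl)) (hsub a (mem_union_left _ h'))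
    have ha' : a ∉ I := fun h' ↦ hIa₂.sstar_notMem (hsub _ (mem_union_right _ rfl))
      (by rw [sstar_sstar]; exact hsub _ (mem_union_left _ h'))
    have hIF : I ⊆ F := fun y hy ↦ by
      rcases hIA hy with rfl | rfl | hyF
      exacts [absurd hy hsa, absurd hy ha', hyF]
    have hclI : M.closure I = F := hI.closure_eq_of_subset_of_rSet_le hF hIF (by omega)
    have hcl (b : J n) : M.closure (I ∪ {b}) = M.closure (insert b F) := by
      rw [union_singleton, ← closure_insert_closure_eq_closure_insert, hclI]
    exact ⟨hcl a ▸ hIa₁, hcl _ ▸ hIa₂⟩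
  · have hIle : I.ncard ≤ M.rSet F + 1 := by
      by_cases hsa : sstar a ∈ I
      · have hIsub : I ⊆ insert (sstar a) F := fun y hy ↦ by
          rcases hIA hy with rfl | rfl | hyF
          exacts [mem_insert _ _, absurd hsa (hIa.sstar_notMem hy), mem_insert_of_mem _ hyF]
        exact (hI.ncard_le_rSet hIsub).trans_eq (rSet_insert ⟨hM.mem_ground _, by rwa [hF.closure]⟩)
      · have hIsub : I ⊆ insert a F := fun y hy ↦ by
          rcases hIA hy with rfl | hy'
          exacts [absurd hy hsa, hy']
        exact (hI.ncard_le_rSet hIsub).trans_eq (rSet_insert ⟨hM.mem_ground _, by rwa [hF.closure]⟩)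
    omega

lemma IsAdmissibleMatroid.admissible_closure_insert_iff (hM : IsAdmissibleMatroid M)
    (hF : M.IsFlat F) (hFa : Admissible F) (ha : a ∉ F) (has : sstar a ∉ F) :
    Admissible (M.closure (insert a F)) ↔ Admissible (M.closure (insert (sstar a) F)) := by
  by_cases h : sstar a ∈ M.closure (insert a F)
  · have h' : a ∈ M.closure (insert (sstar a) F) :=
      (closure_exchange ⟨h, by rwa [hF.closure]⟩).1
    have hself (b : J n) : b ∈ M.closure (insert b F) :=
      M.mem_closure_of_mem' (mem_insert b F) (hM.mem_ground b)
    exact iff_of_false (fun hA ↦ hA.sstar_notMem (hself a) h)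
      (fun hA ↦ hA.sstar_notMem (hself _) (by rwa [sstar_sstar]))
  · exact iff_of_true (hM.admissible_closure_insert hF hFa ha has h).1
      (hM.admissible_closure_insert hF hFa ha has h).2

lemma IsAdmissibleMatroid.sum_epm_of_admissible_flatCovBy (hM : IsAdmissibleMatroid M)
    {s : Finset (Set (J n))} (hF : M.IsFlat F) (hFa : Admissible F)
    (hs : ∀ G, G ∈ s ↔ M.FlatCovBy F G ∧ Admissible G) :
    ∑ G ∈ s, epm G = (#s : ℝ) • epm F := by
  have hmem_of_mem (y : J n) (hy : y ∈ F) : {G ∈ s | y ∈ G} = s ∧ {G ∈ s | sstar y ∈ G} = ∅ :=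
    ⟨Finset.filter_true_of_mem fun G hG ↦ ((hs G).1 hG).1.2.2.1 hy,
      Finset.filter_false_of_mem fun G hG ↦ ((hs G).1 hG).2.sstar_notMem (((hs G).1 hG).1.2.2.1 hy)⟩
  have hcount (x : J n) : (#{G ∈ s | x ∈ G} : ℝ) - #{G ∈ s | sstar x ∈ G} =
      #s * (indic F x - indic F (sstar x)) := by
    by_cases hx : x ∈ F
    · simp [(hmem_of_mem x hx).1, (hmem_of_mem x hx).2, indic, hx, hFa.sstar_notMem hx]
    by_cases hsx : sstar x ∈ F
    · have h := hmem_of_mem _ hsx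
      rw [sstar_sstar] at h
      simp [h.1, h.2, indic, hx, hsx]
    have hcov (y : J n) (hy : y ∉ F) :
        M.closure (insert y F) ∈ s ↔ Admissible (M.closure (insert y F)) := by
      rw [hs]
      exact and_iff_right (hF.flatCovBy_closure_insert ⟨hM.mem_ground y, hy⟩)
    have hs' : ∀ G ∈ s, M.FlatCovBy F G := fun G hG ↦ ((hs G).1 hG).1
    rw [card_filter_mem_of_flatCovBy hs' ⟨hM.mem_ground x, hx⟩,
      card_filter_mem_of_flatCovBy hs' ⟨hM.mem_ground _, hsx⟩]
    simp [hcov x hx, hcov _ hsx, hM.admissible_closure_insert_iff hF hFa hx hsx, indic, hx, hsx]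
  funext i
  have h := hcount (.inl i)
  rw [← sum_indic_apply, ← sum_indic_apply] at h
  rw [sum_epm]
  exact h

end AdmissibleMatroid

section FlagChain

variable {n d : ℕ} {M : Matroid (J n)} {σ : Fin d → Set (J n)} {G : Set (J n)}

lemma IsFlagChain.mono (hσ : IsFlagChain M d σ) {i j : Fin d} (hij : i ≤ j) : σ i ⊆ σ j := by
  rcases hij.eq_or_lt with rfl | h
  exacts [subset_rfl, (hσ.2 i j h).subset]

lemma IsFlagChain.update_iff (hσ : IsFlagChain M d σ) (k : Fin d) :
    IsFlagChain M d (Function.update σ k G) ↔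
      (M.IsFlat G ∧ Admissible G ∧ M.rSet G = k + 1) ∧
        (∀ i < k, σ i ⊆ G) ∧ ∀ j, k < j → G ⊆ σ j := by
  constructor
  · intro h
    refine ⟨by simpa using h.1 k, fun i hi ↦ ?_, fun j hj ↦ ?_⟩
    · simpa [hi.ne] using (h.2 i k hi).subset
    · simpa [hj.ne'] using (h.2 k j hj).subset
  · rintro ⟨hG, hlow, hhigh⟩
    have hrank (i : Fin d) : M.IsFlat (Function.update σ k G i) ∧
        Admissible (Function.update σ k G i) ∧ M.rSet (Function.update σ k G i) = i + 1 := by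
      by_cases hik : i = k
      · subst hik
        simpa using hG
      · simpa [hik] using hσ.1 i
    refine ⟨hrank, fun i j hij ↦ LE.le.ssubset_of_ne ?_ fun h ↦ ?_⟩
    · simp only [Function.update_apply]
      split_ifs with hik hjk hjk
      · exact (hij.ne (hik.trans hjk.symm)).elim
      · exact hhigh j (hik ▸ hij)
      · exact hlow i (hjk ▸ hij)
      · exact (hσ.2 i j hij).subset
    · have hr := (hrank i).2.2
      rw [h, (hrank j).2.2] at hr
      exact hij.ne (Fin.ext (by omega))

lemma IsFlagChain.exists_lowerFlat (hσ : IsFlagChain M d σ) (h0 : M.IsFlat ∅) (k : Fin d) :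
    ∃ L, M.IsFlat L ∧ Admissible L ∧ M.rSet L = k ∧
      epm L ∈ Submodule.span ℝ {v | ∃ i : Fin d, i ≠ k ∧ v = epm (σ i)} ∧
      ∀ G, (∀ i < k, σ i ⊆ G) ↔ L ⊆ G := by
  rcases hk : (k : ℕ) with _ | p
  · refine ⟨∅, h0, admissible_empty, M.rSet_empty, by simp [epm_empty],
      fun G ↦ iff_of_true (fun i hi ↦ ?_) (empty_subset G)⟩
    exact absurd (Fin.lt_def.1 hi) (by omega)
  · set q : Fin d := ⟨p, by omega⟩
    have hqk : q < k := Fin.lt_def.2 (by simp [q]; omega)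
    refine ⟨σ q, (hσ.1 q).1, (hσ.1 q).2.1, (hσ.1 q).2.2, Submodule.subset_span ⟨q, hqk.ne, rfl⟩,
      fun G ↦ ⟨fun h ↦ h q hqk, fun h i hi ↦ (hσ.mono ?_).trans h⟩⟩
    exact Fin.le_def.2 (by have := Fin.lt_def.1 hi; simp [q]; omega)

lemma IsFlagChain.subset_forall_gt_iff (hσ : IsFlagChain M d σ) {k : Fin d}
    (hk : (k : ℕ) + 1 < d) : (∀ j, k < j → G ⊆ σ j) ↔ G ⊆ σ ⟨k + 1, hk⟩ :=
  ⟨fun h ↦ h _ (Fin.lt_def.2 (Nat.lt_succ_self _)),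
    fun h _ hj ↦ h.trans (hσ.mono (Fin.le_def.2 (Fin.lt_def.1 hj)))⟩

end FlagChain

theorem stmt_14_general (n : ℕ) (M : Matroid (J n)) (hM : IsAdmissibleMatroid M)
    (d : ℕ) :
    IsMinkowskiWeight M d (fun _ => 1) := by
  intro σ k hσ
  simp only [Int.cast_one, one_smul]
  obtain ⟨L, hL, hLa, hLr, hLspan, hLsub⟩ := hσ.exists_lowerFlat hM.isFlat_empty k
  have hmem (G : Set (J n)) : IsFlagChain M d (Function.update σ k G) ↔
      (M.FlatCovBy L G ∧ Admissible G) ∧ ∀ j, k < j → G ⊆ σ j := by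
    rw [hσ.update_iff, hLsub, flatCovBy_iff_rSet_eq hL, hLr]
    tauto
  by_cases hk : (k : ℕ) + 1 < d
  · have hT := hσ.1 ⟨k + 1, hk⟩
    have hLT : L ⊆ σ ⟨k + 1, hk⟩ := (hLsub _).1 fun i hi ↦
      (hσ.2 _ _ (hi.trans (Fin.lt_def.2 (Nat.lt_succ_self _)))).subset
    rw [sum_epm_of_flatCovBy_subset hL hT.1 hLT fun G ↦ ?_]
    · refine add_mem (Submodule.subset_span ⟨_, fun h ↦ ?_, rfl⟩) (Submodule.smul_mem _ _ hLspan)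
      simpa using congrArg Fin.val h
    · rw [Finset.mem_filter, hmem, hσ.subset_forall_gt_iff hk]
      simp only [Finset.mem_univ, true_and]
      exact ⟨fun h ↦ ⟨h.1.1, h.2⟩, fun h ↦ ⟨⟨h.1, hT.2.1.mono h.2⟩, h.2⟩⟩
  · rw [hM.sum_epm_of_admissible_flatCovBy hL hLa fun G ↦ ?_]
    · exact Submodule.smul_mem _ _ hLspan
    · rw [Finset.mem_filter, hmem]
      simp only [Finset.mem_univ, true_and, and_iff_left_iff_imp]
      exact fun _ j hj ↦ absurd (Fin.lt_def.1 hj) (by omega)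

theorem stmt_14 (n : ℕ) (hn : 1 ≤ n) (M : Matroid (J n)) (hM : IsAdmissibleMatroid M)
    (d : ℕ) (hrk : M.rnk = d + 1) :
    IsMinkowskiWeight M d (fun _ => 1) :=
  stmt_14_general n M hM d
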